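/- Let (Xₙ) be i.i.d. uniform over {a, b} (p = q = 1/2) and let T be the first n such that X₁⋯Xₙ ends in ba. Then P(T = n) = (n − 1)/2ⁿ for all n ≥ 2. -/

import Mathlib

open scoped Classical

/-- Weight of a binary string of length `n` under the memoryless source with
`P(a) = P(true) = p` and `P(b) = P(false) = 1 - p`. -/
noncomputable def wt (p : ℝ) {n : ℕ} (ω : Fin n → Bool) : ℝ :=
  ∏ i, if ω i then p else 1 - p

/-- A string ends in `ba` (with `a = true`, `b = false`). -/
def hitBa (x : List Bool) : Prop := [false, true] <:+ x

/-- `P(T = n)` where `T` is the first index such that `X₁⋯Xₙ` ends in `ba`. -/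
noncomputable def probSoonerEq (p : ℝ) (n : ℕ) : ℝ :=
  ∑ ω : Fin n → Bool,
    if hitBa (List.ofFn ω) ∧ ∀ m < n, ¬ hitBa ((List.ofFn ω).take m)
    then wt p ω else 0

lemma hitBa_aux (x : List Bool) (h : 2 ≤ x.length) :
    [false, true] <:+ x ↔
      x.get ⟨x.length - 2, by omega⟩ = false ∧ x.get ⟨x.length - 1, by omega⟩ = true := by
  have hl : ([false, true] : List Bool).length = 2 := rfl
  rw [List.suffix_iff_eq_drop, hl]
  constructor
  · intro he
    have h0 : ([false,true] : List Bool)[0]? = (x.drop (x.length - 2))[0]? := by rw [he]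
    have h1 : ([false,true] : List Bool)[1]? = (x.drop (x.length - 2))[1]? := by rw [he]
    rw [List.getElem?_drop] at h0 h1
    have e0 : x.length - 2 + 0 = x.length - 2 := by omega
    have e1 : x.length - 2 + 1 = x.length - 1 := by omega
    rw [e0] at h0; rw [e1] at h1
    rw [List.getElem?_eq_getElem (by omega)] at h0
    rw [List.getElem?_eq_getElem (by omega)] at h1
    simp only [List.getElem_cons_zero, List.getElem_cons_succ] at h0 h1
    rw [List.getElem?_eq_getElem (by omega)] at h0
    rw [List.getElem?_eq_getElem (by omega)] at h1
    simp only [List.get_eq_getElem]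
    exact ⟨(Option.some_inj.mp h0.symm), (Option.some_inj.mp h1.symm)⟩
  · rintro ⟨h1, h2⟩
    have key : ∀ (j j' : ℕ) (hj : j < x.length) (hj' : j' < x.length), j = j' →
        x[j]'hj = x[j']'hj' := by
      intro j j' hj hj' hjj; subst hjj; rfl
    apply List.ext_getElem
    · simp; omega
    · intro i hi hi2
      simp only [hl] at hi
      interval_cases i
      · simp only [List.getElem_drop, List.getElem_cons_zero]
        rw [key _ (x.length - 2) _ (by omega) (by omega)]
        simpa using h1.symm
      · simp only [List.getElem_drop, List.getElem_cons_succ, List.getElem_cons_zero]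
        rw [key _ (x.length - 1) _ (by omega) (by omega)]
        simpa using h2.symm

lemma length_take_ofFn {n : ℕ} (ω : Fin n → Bool) (m : ℕ) (hm : m ≤ n) :
    ((List.ofFn ω).take m).length = m := by
  simp [hm]

lemma getElem_take_ofFn {n : ℕ} (ω : Fin n → Bool) (m i : ℕ) (hm : m ≤ n)
    (hi : i < ((List.ofFn ω).take m).length) :
    ((List.ofFn ω).take m)[i] = ω ⟨i, by rw [length_take_ofFn ω m hm] at hi; omega⟩ := by
  rw [List.getElem_take, List.getElem_ofFn]

lemma hitBa_take_iff {n : ℕ} (ω : Fin n → Bool) (m : ℕ) (hm : m ≤ n) :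
    hitBa ((List.ofFn ω).take m) ↔
      ∃ h2 : 2 ≤ m, ω ⟨m - 2, by omega⟩ = false ∧ ω ⟨m - 1, by omega⟩ = true := by
  by_cases h2 : 2 ≤ m
  · rw [hitBa, hitBa_aux _ (by rw [length_take_ofFn ω m hm]; omega)]
    simp only [List.get_eq_getElem, length_take_ofFn ω m hm, getElem_take_ofFn ω m _ hm]
    constructor
    · rintro ⟨hf, ht⟩; exact ⟨h2, hf, ht⟩
    · rintro ⟨_, hf, ht⟩; exact ⟨hf, ht⟩
  · constructor
    · intro hba
      have := hba.length_le
      simp only [length_take_ofFn ω m hm] at this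
      exfalso
      have : ([false, true] : List Bool).length = 2 := rfl
      omega
    · rintro ⟨h, _⟩; omega

/-- The string `true^k false^(n-1-k) true`. -/
def gfun (n k : ℕ) : Fin n → Bool := fun i => decide ((i : ℕ) < k) || decide ((i : ℕ) = n - 1)

lemma cond_iff {n : ℕ} (hn : 2 ≤ n) (ω : Fin n → Bool) :
    (hitBa (List.ofFn ω) ∧ ∀ m < n, ¬ hitBa ((List.ofFn ω).take m)) ↔
      ∃ k < n - 1, ω = gfun n k := by
  have htake : (List.ofFn ω).take n = List.ofFn ω := by simp
  have hmain := hitBa_take_iff ω n le_rfl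
  rw [htake] at hmain
  rw [hmain]
  have hiff : ∀ m (hm : m ≤ n), hitBa ((List.ofFn ω).take m) ↔
      ∃ h2 : 2 ≤ m, ω ⟨m - 2, by omega⟩ = false ∧ ω ⟨m - 1, by omega⟩ = true :=
    fun m hm => hitBa_take_iff ω m hm
  constructor
  · rintro ⟨⟨_, hA, hB⟩, hC⟩
    -- translate hC
    have hC' : ∀ i : ℕ, ∀ hi : i + 2 ≤ n - 1,
        ¬ (ω ⟨i, by omega⟩ = false ∧ ω ⟨i + 1, by omega⟩ = true) := by
      intro i hi hcontra
      refine hC (i + 2) (by omega) ?_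
      rw [hiff (i + 2) (by omega)]
      refine ⟨by omega, ?_, ?_⟩
      · convert hcontra.1 using 2; simp
      · convert hcontra.2 using 2; simp
    -- define k as least false index
    have hex : ∃ i, ∃ h : i < n, ω ⟨i, h⟩ = false := ⟨n - 2, by omega, hA⟩
    classical
    obtain ⟨hkn, hkfalse⟩ := Nat.find_spec hex
    set k := Nat.find hex with hkdef
    have hkmin : ∀ j, j < k → ∀ h : j < n, ω ⟨j, h⟩ = true := by
      intro j hj h
      have := Nat.find_min hex hj
      push_neg at this
      have := this h
      revert this; cases ω ⟨j, h⟩ <;> simp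
    have hkle : k ≤ n - 2 := Nat.find_le ⟨by omega, hA⟩
    -- all indices in [k, n-2] are false
    have hfall : ∀ i, ∀ hki : k ≤ i, ∀ hin : i ≤ n - 2, ω ⟨i, by omega⟩ = false := by
      intro i hki
      induction i, hki using Nat.le_induction with
      | base => intro _; convert hkfalse
      | succ i hki ih =>
        intro hi
        have hif : ω ⟨i, by omega⟩ = false := ih (by omega)
        by_contra htr
        have htr' : ω ⟨i + 1, by omega⟩ = true := by
          revert htr; cases ω ⟨i + 1, by omega⟩ <;> simp
        exact hC' i (by omega) ⟨hif, htr'⟩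
    refine ⟨k, by omega, ?_⟩
    funext i
    rcases lt_trichotomy (i : ℕ) k with hik | hik | hik
    · rw [hkmin i hik i.isLt]
      simp [gfun, hik]
    · have h1 : ω i = false := by
        have := hfall (i : ℕ) (le_of_eq hik.symm) (by omega)
        convert this
      have h2 : gfun n k i = false := by
        simp only [gfun, Bool.or_eq_false_iff, decide_eq_false_iff_not]
        omega
      rw [h1, h2]
    · by_cases hlast : (i : ℕ) = n - 1
      · have h1 : ω i = true := by
          have hieq : i = (⟨n - 1, by omega⟩ : Fin n) := Fin.ext hlast
          rw [hieq]; exact hB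
        have h2 : gfun n k i = true := by
          simp only [gfun, Bool.or_eq_true, decide_eq_true_eq]
          omega
        rw [h1, h2]
      · have hile : (i : ℕ) ≤ n - 2 := by
          have hlt := i.isLt
          omega
        have h1 : ω i = false := by
          have := hfall (i : ℕ) (le_of_lt hik) hile
          convert this
        have h2 : gfun n k i = false := by
          simp only [gfun, Bool.or_eq_false_iff, decide_eq_false_iff_not]
          omega
        rw [h1, h2]
  · rintro ⟨k, hk, rfl⟩
    refine ⟨⟨hn, ?_, ?_⟩, ?_⟩
    · simp only [gfun, Bool.or_eq_false_iff, decide_eq_false_iff_not]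
      omega
    · simp only [gfun, Bool.or_eq_true, decide_eq_true_eq]
      exact Or.inr trivial
    · intro m hm hba
      rw [hiff m (by omega)] at hba
      obtain ⟨h2, hf, ht⟩ := hba
      simp only [gfun, Bool.or_eq_false_iff, decide_eq_false_iff_not,
        Bool.or_eq_true, decide_eq_true_eq] at hf ht
      omega

lemma gfun_injOn (n : ℕ) (hn : 2 ≤ n) :
    Set.InjOn (gfun n) (Finset.range (n - 1)) := by
  have key : ∀ k1 k2, k1 < n - 1 → k2 < n - 1 → k1 < k2 → gfun n k1 ≠ gfun n k2 := by
    intro k1 k2 h1 h2 hlt heq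
    have := congrFun heq ⟨k1, by omega⟩
    simp only [gfun] at this
    rw [decide_eq_false (by omega : ¬ (k1 < k1)),
      decide_eq_false (by omega : ¬ (k1 = n - 1)),
      decide_eq_true hlt] at this
    simp at this
  intro k1 hk1 k2 hk2 heq
  simp only [Finset.coe_range, Set.mem_Iio] at hk1 hk2
  rcases lt_trichotomy k1 k2 with h | h | h
  · exact absurd heq (key k1 k2 hk1 hk2 h)
  · exact h
  · exact absurd heq.symm (key k2 k1 hk2 hk1 h)

/-- For i.i.d. fair coin flips (`p = q = 1/2`), the sooner-time `T` of the
pattern `ba` satisfies `P(T = n) = (n - 1)/2ⁿ` for all `n ≥ 2`. -/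
theorem soonerTime_prob_eq_fair :
    ∀ n : ℕ, 2 ≤ n →
      probSoonerEq (1 / 2) n = ((n : ℝ) - 1) / 2 ^ n := by
  intro n hn
  have hwt : ∀ ω : Fin n → Bool, wt (1 / 2) ω = (1 / 2 : ℝ) ^ n := by
    intro ω
    unfold wt
    have : (1 : ℝ) - 1 / 2 = 1 / 2 := by norm_num
    simp only [this, ite_self, Finset.prod_const, Finset.card_univ, Fintype.card_fin]
  have step1 : probSoonerEq (1 / 2) n =
      ∑ ω : Fin n → Bool, if ∃ k < n - 1, ω = gfun n k then (1 / 2 : ℝ) ^ n else 0 := by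
    unfold probSoonerEq
    refine Finset.sum_congr rfl fun ω _ => ?_
    exact if_congr (cond_iff hn ω) (hwt ω) rfl
  rw [step1, ← Finset.sum_filter]
  rw [Finset.sum_const]
  have hcard : (Finset.univ.filter
      (fun ω : Fin n → Bool => ∃ k < n - 1, ω = gfun n k)).card = n - 1 := by
    have himg : Finset.univ.filter (fun ω : Fin n → Bool => ∃ k < n - 1, ω = gfun n k)
        = (Finset.range (n - 1)).image (gfun n) := by
      ext ω
      simp only [Finset.mem_filter, Finset.mem_univ, true_and, Finset.mem_image,
        Finset.mem_range]
      constructor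
      · rintro ⟨k, hk, rfl⟩; exact ⟨k, hk, rfl⟩
      · rintro ⟨k, hk, rfl⟩; exact ⟨k, hk, rfl⟩
    rw [himg, Finset.card_image_of_injOn (gfun_injOn n hn), Finset.card_range]
  rw [hcard]
  have h1n : (1 : ℕ) ≤ n := by omega
  rw [nsmul_eq_mul]
  rw [Nat.cast_sub h1n]
  field_simp
  rw [Nat.cast_one, mul_assoc, ← mul_pow]; norm_num
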